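/- arXiv:2002.04144 — 3 statements merged into one kernel-verified Lean document; each statement's English description precedes it below -/
import Mathlib

section
/- For every real x with 0 < x ≤ 0.4, one has x·coth(x) − 1 ≤ 1/16 and 1 − x·cot(x) ≤ 1/16. Hence if the sectional curvature satisfies |K| ≤ 0.16/D², then the discrepancy-related quantity max{ζ−1, 1−δ} is at most 1/16, where ζ = √(|K_min|)·D·coth(√(|K_min|)·D) and δ = √(|K_max|)·D·cot(√(|K_max|)·D). -/
/-!
Near `0` one has `x coth x = 1 + x²/3 - …` and `x cot x = 1 - x²/3 - …`, so both deviations are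
about `0.4²/3 ≈ 0.053 < 1/16` at `x = 0.4`. To make this rigorous, bound `x coth x` above through
`sinh x ≥ x + x³/6` (a partial sum of its series) and `cosh x ≤ exp (x²/2) < 1/(1 - x²/2)`, and
bound `x cot x` below through `cos x ≥ 1 - x²/2` and the Taylor estimate `sin x ≤ x - x³/6 + x⁵/100`.
The curvature condition `|K| ≤ 0.16/D²` says exactly that `√|K| · D ≤ 0.4`.
-/

open Real

namespace Real

lemma add_pow_three_div_six_le_sinh {x : ℝ} (hx : 0 ≤ x) : x + x ^ 3 / 6 ≤ sinh x := by
  have h := sum_le_hasSum (Finset.range 2) (fun n _ => by positivity) (hasSum_sinh x)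
  norm_num [Finset.sum_range_succ, Nat.factorial] at h
  exact h

lemma cosh_lt_one_div_one_sub_sq_div_two {x : ℝ} (hx : x ≠ 0) (hx2 : x ^ 2 < 2) :
    cosh x < 1 / (1 - x ^ 2 / 2) :=
  (cosh_le_exp_half_sq x).trans_lt <|
    exp_bound_div_one_sub_of_interval' (by positivity) (by linarith)

lemma sin_le_sub_pow_three_add_pow_five {x : ℝ} (hx : 0 ≤ x) (hx1 : x ≤ 1) :
    sin x ≤ x - x ^ 3 / 6 + x ^ 5 / 100 := by
  have h := sin_bound (x := x) (by rwa [abs_of_nonneg hx])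
  rw [abs_of_nonneg hx] at h
  linarith [(abs_le.1 h).2]

lemma mul_coth_sub_one_le {x : ℝ} (hx : 0 < x) (hx' : x ≤ 2 / 5) :
    x * (cosh x / sinh x) - 1 ≤ 1 / 16 := by
  have hx2 : x ^ 2 ≤ 4 / 25 := by nlinarith
  have hden : 0 < 1 - x ^ 2 / 2 := by linarith
  have hsinh := add_pow_three_div_six_le_sinh hx.le
  have hcosh := cosh_lt_one_div_one_sub_sq_div_two hx.ne' (by linarith)
  rw [lt_div_iff₀ hden] at hcosh
  have hpoly : 16 ≤ 17 * (1 + x ^ 2 / 6) * (1 - x ^ 2 / 2) := by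
    nlinarith [mul_le_mul hx2 hx2 (sq_nonneg x) (by norm_num)]
  have hcosh' : x * cosh x ≤ 17 / 16 * (x + x ^ 3 / 6) := by
    refine le_of_mul_le_mul_right ?_ hden
    nlinarith [mul_lt_mul_of_pos_left hcosh hx]
  rw [← mul_div_assoc, sub_le_iff_le_add, div_le_iff₀ (sinh_pos_iff.2 hx)]
  linarith

lemma one_sub_mul_cot_le {x : ℝ} (hx : 0 < x) (hx' : x ≤ 2 / 5) :
    1 - x * (cos x / sin x) ≤ 1 / 16 := by
  have hcos := one_sub_sq_div_two_le_cos (x := x)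
  have hsin := sin_le_sub_pow_three_add_pow_five hx.le (by linarith)
  have hsin_pos : 0 < sin x := sin_pos_of_pos_of_lt_pi hx (by linarith [pi_gt_three])
  have hx2 : x ^ 2 ≤ 4 / 25 := by nlinarith
  have hpoly : 15 / 16 * (x - x ^ 3 / 6 + x ^ 5 / 100) ≤ x * (1 - x ^ 2 / 2) := by
    nlinarith [mul_le_mul hx2 hx2 (sq_nonneg x) (by norm_num)]
  rw [← mul_div_assoc, sub_le_comm, le_div_iff₀ hsin_pos]
  linarith [mul_le_mul_of_nonneg_left hcos hx.le]

end Real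

lemma sqrt_abs_mul_le_of_abs_le_sq_div_sq {K D c : ℝ} (hD : 0 < D) (hc : 0 ≤ c)
    (hK : |K| ≤ c ^ 2 / D ^ 2) : √|K| * D ≤ c := by
  rw [le_div_iff₀ (by positivity), ← sq_sqrt (abs_nonneg K), ← mul_pow] at hK
  exact (pow_le_pow_iff_left₀ (by positivity) hc two_ne_zero).1 hK

theorem stmt_2 :
    (∀ x : ℝ, 0 < x → x ≤ 0.4 →
      x * (Real.cosh x / Real.sinh x) - 1 ≤ 1 / 16 ∧
      1 - x * (Real.cos x / Real.sin x) ≤ 1 / 16) ∧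
    (∀ Kmin Kmax D : ℝ, 0 < D → Kmin ≠ 0 → Kmax ≠ 0 →
      |Kmin| ≤ 0.16 / D ^ 2 → |Kmax| ≤ 0.16 / D ^ 2 →
      max
        (Real.sqrt |Kmin| * D *
          (Real.cosh (Real.sqrt |Kmin| * D) / Real.sinh (Real.sqrt |Kmin| * D)) - 1)
        (1 - Real.sqrt |Kmax| * D *
          (Real.cos (Real.sqrt |Kmax| * D) / Real.sin (Real.sqrt |Kmax| * D)))
      ≤ 1 / 16) := by
  have hbounds (x : ℝ) (hx : 0 < x) (hx' : x ≤ 0.4) :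
      x * (cosh x / sinh x) - 1 ≤ 1 / 16 ∧ 1 - x * (cos x / sin x) ≤ 1 / 16 := by
    norm_num at hx'
    exact ⟨mul_coth_sub_one_le hx hx', one_sub_mul_cot_le hx hx'⟩
  refine ⟨hbounds, fun Kmin Kmax D hD hKmin hKmax hbmin hbmax => ?_⟩
  have hscale {K : ℝ} (hK : K ≠ 0) (hb : |K| ≤ 0.16 / D ^ 2) :
      0 < √|K| * D ∧ √|K| * D ≤ 0.4 :=
    ⟨by positivity,
      sqrt_abs_mul_le_of_abs_le_sq_div_sq hD (by norm_num) (by norm_num at hb ⊢; exact hb)⟩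
  obtain ⟨hmin_pos, hmin_le⟩ := hscale hKmin hbmin
  obtain ⟨hmax_pos, hmax_le⟩ := hscale hKmax hbmax
  exact max_le (hbounds _ hmin_pos hmin_le).1 (hbounds _ hmax_pos hmax_le).2
end

section
/- Let ζ ≥ 1, L > 0, and define sequences (a_k), (A_k) by A_0 = 0, a_{k+1} the positive root of ζ·a_{k+1}² / (A_k + a_{k+1}) = 1/L, and A_{k+1} = A_k + a_{k+1}. Then for all k ≥ 0, A_k ≥ k² / (4·ζ·L). -/
/-!
With `c = ζ L` the recurrence reads `c a_{k+1}² = A_k + a_{k+1} = A_{k+1}`. Put `s = 2 c a_{k+1}`;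
then `s² - 2 s = 4 c A_k ≥ k²` by induction, which forces `s ≥ k + 1`, hence
`4 c A_{k+1} = s² ≥ (k + 1)²`.
-/

lemma add_one_sq_le_four_mul_add {c x B a : ℝ} (hc : 0 < c) (ha : 0 < a)
    (h : c * a ^ 2 = B + a) (hB : x ^ 2 ≤ 4 * c * B) :
    (x + 1) ^ 2 ≤ 4 * c * (B + a) := by
  set s := 2 * c * a with hs_def
  have hs_pos : 0 < s := by positivity
  have hs_sq : s ^ 2 = 4 * c * B + 2 * s := by rw [hs_def]; linear_combination 4 * c * h
  have hs_two : 2 ≤ s := by nlinarith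
  have hx : -(s - 1) ≤ x ∧ x ≤ s - 1 := abs_le_of_sq_le_sq' (by nlinarith) (by linarith)
  calc (x + 1) ^ 2 ≤ s ^ 2 := sq_le_sq' (by linarith) (by linarith)
    _ = 4 * c * (B + a) := by rw [hs_def]; linear_combination 4 * c * h

lemma sq_le_four_mul_of_mul_sq_eq {c : ℝ} (hc : 0 < c) {a A : ℕ → ℝ} (hA0 : A 0 = 0)
    (ha_pos : ∀ k, 0 < a (k + 1)) (hrec : ∀ k, c * a (k + 1) ^ 2 = A k + a (k + 1))
    (hA : ∀ k, A (k + 1) = A k + a (k + 1)) (k : ℕ) :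
    (k : ℝ) ^ 2 ≤ 4 * c * A k := by
  induction k with
  | zero => simp [hA0]
  | succ n ih =>
    rw [hA, Nat.cast_succ]
    exact add_one_sq_le_four_mul_add hc (ha_pos n) (hrec n) ih

theorem stmt_3 (ζ L : ℝ) (hζ : 1 ≤ ζ) (hL : 0 < L)
    (a A : ℕ → ℝ) (hA0 : A 0 = 0)
    (ha_pos : ∀ k : ℕ, 0 < a (k + 1))
    (ha_eq : ∀ k : ℕ, ζ * (a (k + 1)) ^ 2 / (A k + a (k + 1)) = 1 / L)
    (hA : ∀ k : ℕ, A (k + 1) = A k + a (k + 1)) :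
    ∀ k : ℕ, A k ≥ (k : ℝ) ^ 2 / (4 * ζ * L) := by
  have hc : 0 < ζ * L := mul_pos (by linarith) hL
  have hrec (k : ℕ) : ζ * L * a (k + 1) ^ 2 = A k + a (k + 1) := by
    have hden : A k + a (k + 1) ≠ 0 := fun h0 => hL.ne (by simpa [h0] using ha_eq k)
    have h := ha_eq k
    field_simp at h
    linarith
  intro k
  have hk := sq_le_four_mul_of_mul_sq_eq hc hA0 ha_pos hrec hA k
  rw [ge_iff_le, div_le_iff₀ (by positivity)]
  linarith
end

section
/- Let f : ℝⁿ → ℝ be convex, differentiable, with L-Lipschitz gradient, let x* be a minimizer of f, and let ζ ≥ 1. Consider sequences defined by A_0 = 0, arbitrary points y_k with f(y_k) ≤ f(x_k) and ⟨∇f(y_k), v_k − y_k⟩ ≥ 0, x_{k+1} = y_k − (1/L)∇f(y_k), a_{k+1} > 0 with ζ·a_{k+1}²/(A_k + a_{k+1}) = 1/L, A_{k+1} = A_k + a_{k+1}, and v_{k+1} = v_k − a_{k+1}∇f(y_k), started at x_0 = v_0. Define ψ_k* recursively by ψ_0* = 0 and ψ_{k+1}* = ψ_k* + a_{k+1} f(y_k)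 − (ζ·a_{k+1}²/2)·‖∇f(y_k)‖². Then for all k: (C1) A_k·f(x_k) ≤ ψ_k*, and (C2) ψ_{k+1}* + ½‖v_{k+1} − x*‖² ≤ ψ_k* + ½‖v_k − x*‖² + a_{k+1}·(f(y_k) + ⟨∇f(y_k), x* − y_k⟩). Consequently, f(x_k) − f(x*) ≤ 2·ζ·L·‖x_0 − x*‖²/k². -/
/-!
The descent lemma `f z ≤ f w + ⟪∇f w, z - w⟫ + L/2 ‖z - w‖²` makes the gradient step from `y_k`
decrease `f` by `‖∇f(y_k)‖² / (2L)`. Since `A_{k+1} = ζ L a_{k+1}²`, this gives (C1) by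
induction. (C2) comes from expanding `‖v_k - a_{k+1} ∇f(y_k) - x*‖²`, then using
`⟪∇f(y_k), v_k - y_k⟫ ≥ 0` and `ζ ≥ 1`. Convexity then makes `ψ_k + ½‖v_k - x*‖² - A_k f(x*)`
nonincreasing, so `A_k (f(x_k) - f(x*)) ≤ ½‖x_0 - x*‖²`. Finally, `A_{k+1} = ζ L a_{k+1}²`
forces `√A_k` to grow by at least `1 / (2√(ζL))` per step, so `A_k ≥ k² / (4ζL)`.
-/

open RealInnerProductSpace

section Smooth

variable {E : Type*} [NormedAddCommGroup E] [InnerProductSpace ℝ E] [CompleteSpace E]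
  {f : E → ℝ}

theorem HasGradientAt.hasDerivAt_add_smul {g w d : E} {t : ℝ}
    (hg : HasGradientAt f g (w + t • d)) :
    HasDerivAt (fun s : ℝ => f (w + s • d)) ⟪g, d⟫ t := by
  have hline : HasDerivAt (fun s : ℝ => w + s • d) d t := by
    simpa using ((hasDerivAt_id t).smul_const d).const_add w
  have := (hasGradientAt_iff_hasFDerivAt.mp hg).comp_hasDerivAt t hline
  rwa [InnerProductSpace.toDual_apply_apply] at this

theorem ConvexOn.add_inner_sub_le_of_hasGradientAt {s : Set E} {g w z : E}
    (hf : ConvexOn ℝ s f) (hw : w ∈ s) (hz : z ∈ s) (hg : HasGradientAt f g w) :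
    f w + ⟪g, z - w⟫ ≤ f z := by
  have hline : ConvexOn ℝ (AffineMap.lineMap w z ⁻¹' s)
      (fun t : ℝ => f (w + t • (z - w))) := by
    have hcomp : (fun t : ℝ => f (w + t • (z - w))) = f ∘ AffineMap.lineMap w z := by
      ext t
      simp [AffineMap.lineMap_apply_module', add_comm]
    exact hcomp ▸ hf.comp_affineMap _
  have hd : HasDerivAt (fun t : ℝ => f (w + t • (z - w))) ⟪g, z - w⟫ 0 :=
    HasGradientAt.hasDerivAt_add_smul (by simpa using hg)
  have hslope :=
    hline.le_slope_of_hasDerivAt (x := 0) (y := 1) (by simpa) (by simpa) one_pos hd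
  simp only [slope_def_field, one_smul, add_sub_cancel, zero_smul, add_zero, sub_zero,
    div_one] at hslope
  linarith

theorem le_add_inner_gradient_add_sq (hf : Differentiable ℝ f) {L : ℝ}
    (hlip : ∀ x y, ‖gradient f x - gradient f y‖ ≤ L * ‖x - y‖) (w z : E) :
    f z ≤ f w + ⟪gradient f w, z - w⟫ + L / 2 * ‖z - w‖ ^ 2 := by
  set d := z - w with hd
  -- the gap to the quadratic model along the segment; its derivative is `≤ 0` for `t ≥ 0`
  set h : ℝ → ℝ := fun t => f (w + t • d) - t * ⟪gradient f w, d⟫ - L / 2 * t ^ 2 * ‖d‖ ^ 2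
  set h' : ℝ → ℝ := fun t =>
    ⟪gradient f (w + t • d), d⟫ - ⟪gradient f w, d⟫ - L * t * ‖d‖ ^ 2
  have hderiv : ∀ t, HasDerivAt h (h' t) t := fun t => by
    refine ((((hf (w + t • d)).hasGradientAt.hasDerivAt_add_smul).fun_sub
      ((hasDerivAt_id' t).mul_const ⟪gradient f w, d⟫)).fun_sub
      (((hasDerivAt_pow 2 t).const_mul (L / 2)).mul_const (‖d‖ ^ 2))).congr_deriv ?_
    simp only [h']
    ring
  obtain ⟨c, hc, hslope⟩ := exists_hasDerivAt_eq_slope h h' one_pos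
    (fun t _ => (hderiv t).continuousAt.continuousWithinAt) (fun t _ => hderiv t)
  have hc' : h' c ≤ 0 :=
    calc h' c = ⟪gradient f (w + c • d) - gradient f w, d⟫ - L * c * ‖d‖ ^ 2 := by
          rw [inner_sub_left]
      _ ≤ ‖gradient f (w + c • d) - gradient f w‖ * ‖d‖ - L * c * ‖d‖ ^ 2 := by
          gcongr; exact real_inner_le_norm _ _
      _ ≤ L * ‖c • d‖ * ‖d‖ - L * c * ‖d‖ ^ 2 := by
          gcongr; simpa using hlip (w + c • d) w
      _ = 0 := by rw [norm_smul, Real.norm_of_nonneg hc.1.le]; ring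
  rw [hslope] at hc'
  have h10 : h 1 ≤ h 0 := by linarith [div_nonpos_iff.mp hc']
  simp only [h, one_smul, zero_smul, add_zero, zero_mul, one_pow, one_mul, sub_zero, hd,
    add_sub_cancel] at h10
  linarith

theorem apply_gradient_step_le (hf : Differentiable ℝ f) {L : ℝ}
    (hlip : ∀ x y, ‖gradient f x - gradient f y‖ ≤ L * ‖x - y‖) (w : E) :
    f (w - (1 / L) • gradient f w) ≤ f w - 1 / (2 * L) * ‖gradient f w‖ ^ 2 := by
  have h := le_add_inner_gradient_add_sq hf hlip w (w - (1 / L) • gradient f w)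
  rw [sub_sub_cancel_left, inner_neg_right, real_inner_smul_right, real_inner_self_eq_norm_sq,
    norm_neg, norm_smul, mul_pow, Real.norm_eq_abs, sq_abs] at h
  have hcoef : -(1 / L) + L / 2 * (1 / L) ^ 2 = -(1 / (2 * L)) := by
    rcases eq_or_ne L 0 with rfl | hL
    · simp
    · field_simp; ring
  nlinarith

end Smooth

theorem norm_sub_smul_sub_sq_le {E : Type*} [NormedAddCommGroup E] [InnerProductSpace ℝ E]
    {g v y : E} {a : ℝ} (ha : 0 ≤ a) (hgv : 0 ≤ ⟪g, v - y⟫) (x : E) :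
    ‖v - a • g - x‖ ^ 2 ≤ ‖v - x‖ ^ 2 + 2 * a * ⟪g, x - y⟫ + a ^ 2 * ‖g‖ ^ 2 := by
  have hsplit : ⟪g, v - x⟫ = ⟪g, v - y⟫ - ⟪g, x - y⟫ := by
    rw [← inner_sub_right, sub_sub_sub_cancel_right]
  rw [sub_right_comm, norm_sub_sq_real, real_inner_smul_right, real_inner_comm, hsplit, norm_smul,
    mul_pow, Real.norm_eq_abs, sq_abs]
  nlinarith [mul_nonneg ha hgv]

theorem add_eq_mul_sq_of_div_eq {ζ L A a : ℝ} (hL : L ≠ 0) (h : ζ * a ^ 2 / (A + a) = 1 / L) :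
    A + a = ζ * L * a ^ 2 := by
  have hden : A + a ≠ 0 := by
    rintro h0
    exact hL (by simpa [h0, eq_comm] using h)
  field_simp at h
  linarith

theorem mul_le_add_of_descent {ζ L A A' a fx fy fx' ψ G : ℝ} (hA : 0 ≤ A) (hA' : 0 ≤ A')
    (hAA : A' = A + a) (hAa : A' = ζ * L * a ^ 2) (hL : L ≠ 0) (hy : fy ≤ fx)
    (hx' : fx' ≤ fy - 1 / (2 * L) * G) (ih : A * fx ≤ ψ) :
    A' * fx' ≤ ψ + a * fy - ζ * a ^ 2 / 2 * G := by
  have hcoef : A' * (1 / (2 * L)) = ζ * a ^ 2 / 2 := by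
    rw [hAa]; field_simp
  have hsplit : A' * (fy - 1 / (2 * L) * G) = A * fy + a * fy - ζ * a ^ 2 / 2 * G := by
    linear_combination fy * hAA - G * hcoef
  linarith [mul_le_mul_of_nonneg_left hx' hA', mul_le_mul_of_nonneg_left hy hA]

theorem sq_add_one_le_of_add_eq_mul_sq {c A a k : ℝ} (hk0 : 0 ≤ k) (hk : k ^ 2 ≤ 4 * c * A)
    (hA : 0 ≤ A) (ha : 0 < a) (hAa : A + a = c * a ^ 2) :
    (k + 1) ^ 2 ≤ 4 * c * (A + a) := by
  -- `A = c a² - a ≥ 0` gives `c a ≥ 1`, and `k² ≤ 4 c (c a² - a) ≤ (2 c a - 1)²`.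
  have hca : 1 ≤ c * a := by nlinarith
  have hk' : k ≤ 2 * c * a - 1 := (sq_le_sq₀ hk0 (by linarith)).mp (by nlinarith)
  nlinarith

theorem sq_le_four_mul_of_add_eq_mul_sq {c : ℝ} {a A : ℕ → ℝ} (hA0 : A 0 = 0)
    (hAnn : ∀ k, 0 ≤ A k) (ha : ∀ k, 0 < a (k + 1)) (hA : ∀ k, A (k + 1) = A k + a (k + 1))
    (hAa : ∀ k, A (k + 1) = c * a (k + 1) ^ 2) (k : ℕ) :
    (k : ℝ) ^ 2 ≤ 4 * c * A k := by
  induction k with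
  | zero => simp [hA0]
  | succ k ih =>
    push_cast
    rw [hA k]
    exact sq_add_one_le_of_add_eq_mul_sq k.cast_nonneg ih (hAnn k) (ha k)
      ((hA k).symm.trans (hAa k))

theorem le_div_sq_of_mul_le {c R A e k : ℝ} (hc : 0 < c) (hR : 0 ≤ R) (hk : 0 < k)
    (hkA : k ^ 2 ≤ 4 * c * A) (he : A * e ≤ R / 2) :
    e ≤ 2 * c * R / k ^ 2 := by
  rw [le_div_iff₀ (by positivity)]
  rcases le_or_gt e 0 with he0 | he0
  · nlinarith [mul_nonneg hc.le hR, sq_nonneg k]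
  · nlinarith [mul_le_mul_of_nonneg_left hkA he0.le]

theorem stmt_14_general {n : ℕ} (f : EuclideanSpace ℝ (Fin n) → ℝ)
    (hdiff : Differentiable ℝ f) (hconv : ConvexOn ℝ Set.univ f)
    (L : ℝ) (hL : 0 < L)
    (hlip : ∀ x y, ‖gradient f x - gradient f y‖ ≤ L * ‖x - y‖)
    (xstar : EuclideanSpace ℝ (Fin n))
    (ζ : ℝ) (hζ : 1 ≤ ζ)
    (x v y : ℕ → EuclideanSpace ℝ (Fin n)) (a A ψ : ℕ → ℝ)
    (hx0v0 : x 0 = v 0) (hA0 : A 0 = 0)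
    (hy1 : ∀ k, f (y k) ≤ f (x k))
    (hy2 : ∀ k, ⟪gradient f (y k), v k - y k⟫ ≥ 0)
    (hxstep : ∀ k, x (k + 1) = y k - (1 / L) • gradient f (y k))
    (ha_pos : ∀ k, 0 < a (k + 1))
    (ha_eq : ∀ k, ζ * (a (k + 1)) ^ 2 / (A k + a (k + 1)) = 1 / L)
    (hA : ∀ k, A (k + 1) = A k + a (k + 1))
    (hvstep : ∀ k, v (k + 1) = v k - a (k + 1) • gradient f (y k))
    (hψ0 : ψ 0 = 0)
    (hψ : ∀ k, ψ (k + 1) =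
      ψ k + a (k + 1) * f (y k) - (ζ * (a (k + 1)) ^ 2 / 2) * ‖gradient f (y k)‖ ^ 2) :
    (∀ k, A k * f (x k) ≤ ψ k) ∧
    (∀ k, ψ (k + 1) + (1 / 2) * ‖v (k + 1) - xstar‖ ^ 2 ≤
      ψ k + (1 / 2) * ‖v k - xstar‖ ^ 2 +
        a (k + 1) * (f (y k) + ⟪gradient f (y k), xstar - y k⟫)) ∧
    (∀ k : ℕ, 1 ≤ k →
      f (x k) - f xstar ≤ 2 * ζ * L * ‖x 0 - xstar‖ ^ 2 / (k : ℝ) ^ 2) := by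
  have hAa : ∀ k, A (k + 1) = ζ * L * a (k + 1) ^ 2 := fun k =>
    (hA k).trans (add_eq_mul_sq_of_div_eq hL.ne' (ha_eq k))
  have hAnn : ∀ k, 0 ≤ A k := fun k =>
    hA0 ▸ monotone_nat_of_le_succ (fun k => by linarith [hA k, ha_pos k]) k.zero_le
  have hC1 : ∀ k, A k * f (x k) ≤ ψ k := by
    intro k
    induction k with
    | zero => simp [hA0, hψ0]
    | succ k ih =>
      rw [hψ k]
      exact mul_le_add_of_descent (hAnn k) (hAnn (k + 1)) (hA k) (hAa k) hL.ne' (hy1 k)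
        (hxstep k ▸ apply_gradient_step_le hdiff hlip (y k)) ih
  have hC2 : ∀ k, ψ (k + 1) + (1 / 2) * ‖v (k + 1) - xstar‖ ^ 2 ≤
      ψ k + (1 / 2) * ‖v k - xstar‖ ^ 2 +
        a (k + 1) * (f (y k) + ⟪gradient f (y k), xstar - y k⟫) := fun k => by
    have hv := norm_sub_smul_sub_sq_le (ha_pos k).le (hy2 k) xstar
    have hζa : a (k + 1) ^ 2 * ‖gradient f (y k)‖ ^ 2 ≤
        ζ * (a (k + 1) ^ 2 * ‖gradient f (y k)‖ ^ 2) := le_mul_of_one_le_left (by positivity) hζ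
    rw [hψ k, hvstep k]
    linarith
  have hΦ : Antitone fun k => ψ k + 1 / 2 * ‖v k - xstar‖ ^ 2 - A k * f xstar := by
    refine antitone_nat_of_succ_le fun k => ?_
    have htangent := hconv.add_inner_sub_le_of_hasGradientAt (Set.mem_univ _)
      (Set.mem_univ xstar) (hdiff (y k)).hasGradientAt
    have hAf : A (k + 1) * f xstar = A k * f xstar + a (k + 1) * f xstar := by
      rw [hA k]; ring
    linarith [hC2 k, mul_le_mul_of_nonneg_left htangent (ha_pos k).le]
  refine ⟨hC1, hC2, fun k hk => ?_⟩
  rw [mul_assoc 2 ζ]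
  refine le_div_sq_of_mul_le (by positivity) (sq_nonneg _) (by positivity)
    (sq_le_four_mul_of_add_eq_mul_sq hA0 hAnn ha_pos hA hAa k) ?_
  have hΦk := hΦ k.zero_le
  simp only [hψ0, hA0, zero_mul, sub_zero, zero_add] at hΦk
  rw [hx0v0]
  linarith [hC1 k, sq_nonneg ‖v k - xstar‖]

theorem stmt_14 {n : ℕ} (f : EuclideanSpace ℝ (Fin n) → ℝ)
    (hdiff : Differentiable ℝ f) (hconv : ConvexOn ℝ Set.univ f)
    (L : ℝ) (hL : 0 < L)
    (hlip : ∀ x y, ‖gradient f x - gradient f y‖ ≤ L * ‖x - y‖)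
    (xstar : EuclideanSpace ℝ (Fin n)) (hmin : ∀ z, f xstar ≤ f z)
    (ζ : ℝ) (hζ : 1 ≤ ζ)
    (x v y : ℕ → EuclideanSpace ℝ (Fin n)) (a A ψ : ℕ → ℝ)
    (hx0v0 : x 0 = v 0) (hA0 : A 0 = 0)
    (hy1 : ∀ k, f (y k) ≤ f (x k))
    (hy2 : ∀ k, ⟪gradient f (y k), v k - y k⟫ ≥ 0)
    (hxstep : ∀ k, x (k + 1) = y k - (1 / L) • gradient f (y k))
    (ha_pos : ∀ k, 0 < a (k + 1))
    (ha_eq : ∀ k, ζ * (a (k + 1)) ^ 2 / (A k + a (k + 1)) = 1 / L)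
    (hA : ∀ k, A (k + 1) = A k + a (k + 1))
    (hvstep : ∀ k, v (k + 1) = v k - a (k + 1) • gradient f (y k))
    (hψ0 : ψ 0 = 0)
    (hψ : ∀ k, ψ (k + 1) =
      ψ k + a (k + 1) * f (y k) - (ζ * (a (k + 1)) ^ 2 / 2) * ‖gradient f (y k)‖ ^ 2) :
    (∀ k, A k * f (x k) ≤ ψ k) ∧
    (∀ k, ψ (k + 1) + (1 / 2) * ‖v (k + 1) - xstar‖ ^ 2 ≤
      ψ k + (1 / 2) * ‖v k - xstar‖ ^ 2 +
        a (k + 1) * (f (y k) + ⟪gradient f (y k), xstar - y k⟫)) ∧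
    (∀ k : ℕ, 1 ≤ k →
      f (x k) - f xstar ≤ 2 * ζ * L * ‖x 0 - xstar‖ ^ 2 / (k : ℝ) ^ 2) :=
  stmt_14_general f hdiff hconv L hL hlip xstar ζ hζ x v y a A ψ hx0v0 hA0 hy1 hy2 hxstep ha_pos
    ha_eq hA hvstep hψ0 hψ
end
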